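/- arXiv:1711.04300 — 9 statements merged into one kernel-verified Lean document; each statement's English description precedes it below -/
import Mathlib

section
/- In every bicommutative algebra, the commutator satisfies the Jacobi identity: for all elements a, b, c, [[a,b],c] + [[b,c],a] + [[c,a],b] = 0. -/
/-- The commutator `[x,y] = x*y - y*x`. -/
def lieBracket {A : Type*} [Mul A] [Sub A] (x y : A) : A := x * y - y * x

/-- In every bicommutative algebra (a nonassociative ring satisfying
`a(bc) = b(ac)` and `(ab)c = (ac)b`), the commutator satisfies the Jacobi identity. -/
theorem bicomm_commutator_jacobi (A : Type*) [NonUnitalNonAssocRing A]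
    (hl : ∀ a b c : A, a * (b * c) = b * (a * c))
    (hr : ∀ a b c : A, (a * b) * c = (a * c) * b)
    (a b c : A) :
    lieBracket (lieBracket a b) c + lieBracket (lieBracket b c) a
      + lieBracket (lieBracket c a) b = 0 := by
  simp only [lieBracket, sub_mul, mul_sub]
  rw [hr a b c, hr b a c, hr c a b, hl c a b, hl c b a, hl a b c]
  abel
end

section
/- In every bicommutative algebra, the commutator satisfies the metabelian identity: for all elements a, b, c, d, [[a,b],[c,d]] = 0. -/
/-- In every bicommutative algebra, the commutator satisfies the metabelian
identity `[[a,b],[c,d]] = 0`. -/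
theorem bicomm_commutator_metabelian (A : Type*) [NonUnitalNonAssocRing A]
    (hl : ∀ a b c : A, a * (b * c) = b * (a * c))
    (hr : ∀ a b c : A, (a * b) * c = (a * c) * b)
    (a b c d : A) :
    lieBracket (lieBracket a b) (lieBracket c d) = 0 := by
  have swap2 : ∀ x y z w : A, (x*y)*(z*w) = (x*w)*(z*y) := by
    intro x y z w
    rw [hl (x*y) z w, hr x y w, ← hl (x*w) z y]
  have swap1 : ∀ x y z w : A, (x*y)*(z*w) = (z*y)*(x*w) := by
    intro x y z w
    rw [hr x y (z*w), hl x z w, ← hr z y (x*w)]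
  have key : ∀ x y z w : A, (x*y)*(z*w) = (z*w)*(x*y) := by
    intro x y z w
    rw [swap2, swap1, swap2]
  simp only [lieBracket, sub_mul, mul_sub]
  rw [key a b c d, key a b d c, key b a c d, key b a d c]
  abel
end

section
/- In every bicommutative algebra, the anti-commutator satisfies the minus-Tortken identity: for all elements a, b, c, d, {{a,b},{c,d}} − {{a,d},{c,b}} = −{(a,b,c),d} + {(a,d,c),b}. -/
/-- The anti-commutator `{x,y} = x*y + y*x`. -/
def jordanBracket {A : Type*} [Mul A] [Add A] (x y : A) : A := x * y + y * x

/-- The anti-commutator associator `(a,b,c) = {a,{b,c}} - {{a,b},c}`. -/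
def jordanAssoc {A : Type*} [Mul A] [Add A] [Sub A] (a b c : A) : A :=
  jordanBracket a (jordanBracket b c) - jordanBracket (jordanBracket a b) c

/-- In every bicommutative algebra, the anti-commutator satisfies the
minus-Tortken identity
`{{a,b},{c,d}} - {{a,d},{c,b}} = -{(a,b,c),d} + {(a,d,c),b}`. -/
theorem bicomm_anticommutator_minus_tortken (A : Type*) [NonUnitalNonAssocRing A]
    (hl : ∀ a b c : A, a * (b * c) = b * (a * c))
    (hr : ∀ a b c : A, (a * b) * c = (a * c) * b)
    (a b c d : A) :
    jordanBracket (jordanBracket a b) (jordanBracket c d)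
      - jordanBracket (jordanBracket a d) (jordanBracket c b)
      = -jordanBracket (jordanAssoc a b c) d + jordanBracket (jordanAssoc a d c) b := by
  simp only [jordanBracket, jordanAssoc, mul_add, add_mul, sub_mul, mul_sub]
  linear_combination (norm := abel) (hl (c * b) a d) + (hr c (a * d) b) + (congrArg (fun t => t * b) (hl a c d)) + (hr a b (c * d)) + (congrArg (fun t => a * t) (hr c d b)) + (hl (c * d) a b) + (hl (d * b) a c) + (hr d (a * c) b) + (congrArg (fun t => t * b) (hl a d c)) + (hr a b (d * c)) + (congrArg (fun t => a * t) (hr d c b)) + (hl (d * c) a b) + (hl (c * a) b d) + (hr c (b * d) a) + (congrArg (fun t => t * a) (hl b c d)) + (hr b a (c * d)) + (congrArg (fun t => b * t) (hr c d a)) + (hl (c * d) b a) + (hl (d * a) b c) + (hr d (b * c) a) + (congrArg (fun t => t * a) (hl b d c)) + (hr b a (d * c)) + (congrArg (fun t => b * t) (hr d c a)) + (hl (d * c) b a) - (congrArg (fun t => a * t) (hr c d b)) - (hl (c * d) a b) - (hr c (a * b) d) - (congrArg (fun t => t * d) (hl a c b)) - (hr a d (c * b)) - (hl (c * b) a d)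 - (congrArg (fun t => a * t) (hr b d c)) - (hl (b * d) a c) - (hr b (a * c) d) - (congrArg (fun t => t * d) (hl a b c)) - (hr a d (b * c)) - (hl (b * c) a d) - (hl (d * a) c b) - (congrArg (fun t => c * t) (hr d b a)) - (hl (d * b) c a) - (hr d (c * a) b) - (congrArg (fun t => t * b) (hl c d a)) - (hr c b (d * a)) - (hl (d * a) b c) - (congrArg (fun t => b * t) (hr d c a)) - (hl (d * c) b a) - (hr d (b * a) c) - (congrArg (fun t => t * c) (hl b d a)) - (hr b c (d * a)) - (hl (d * b) a c) - (hr d (a * c) b) - (congrArg (fun t => t * b) (hl a d c)) - (hl b a (d * c)) - (hr (d * a) c b) - (congrArg (fun t => t * b) (hr d c a)) - (congrArg (fun t => b * t) (hr d c a)) - (hl (c * b) a d) - (hr c (a * d) b) - (congrArg (fun t => t * b) (hl a c d)) - (hl b a (c * d)) - (hr (c * a) d b) - (congrArg (fun t => t * b) (hr c d a)) - (congrArg (fun t => b * t) (hr c d a)) + (hr (a * b) d c) + (congrArg (fun t => t * c) (hr a d b)) + (hr (a * d) c b) + (congrArg (fun t => a * t) (hr b d c)) + (hl (b * d) a c) +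 (hr b (a * c) d) + (congrArg (fun t => t * d) (hl a b c)) + (hr a d (b * c)) + (hl b (a * d) c) + (hl (c * b) a d) + (hr c (a * d) b) + (hl b a (c * d)) + (congrArg (fun t => b * t) (hl c a d)) + (hr (d * a) c b) + (congrArg (fun t => c * t) (hr d b a)) + (hl (d * b) c a) + (hr d (c * a) b) + (congrArg (fun t => t * b) (hl c d a)) + (congrArg (fun t => a * t) (hr b d c)) + (hl (b * d) a c) + (hr b (a * c) d) + (congrArg (fun t => t * d) (hl a b c)) + (congrArg (fun t => a * t) (hl d b c)) + (hl d a (b * c)) + (congrArg (fun t => t * d) (hr b c a)) + (congrArg (fun t => b * t) (hr d c a)) + (hl (d * c) b a) + (hr d (b * a) c) + (congrArg (fun t => t * c) (hl b d a)) + (hr b c (d * a)) + (hl d (b * c) a) + (congrArg (fun t => a * t) (hr c d b)) + (hl (c * d) a b) + (hr c (a * b) d) + (congrArg (fun t => t * d) (hl a c b)) + (congrArg (fun t => a * t) (hl d c b)) + (hl d a (c * b)) + (congrArg (fun t => t * d) (hr c b a)) + (congrArg (fun t => c * t) (hr d b a)) + (hl (d * b) c a) + (hr d (c * a) b) + (congrArg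 (fun t => t * b) (hl c d a)) + (hr c b (d * a)) + (hl d (c * b) a) - (hl (d * b) a c) - (hr d (a * c) b) - (congrArg (fun t => t * b) (hl a d c)) - (hr a b (d * c)) - (hl d (a * b) c) - (congrArg (fun t => a * t) (hr c d b)) - (hl (c * d) a b) - (hr c (a * b) d) - (hl c a (d * b)) - (congrArg (fun t => c * t) (hl d a b)) - (hl d c (a * b)) - (hl (d * a) b c) - (hr d (b * c) a) - (congrArg (fun t => t * a) (hl b d c)) - (hr b a (d * c)) - (hl d (b * a) c) - (congrArg (fun t => b * t) (hr c d a)) - (hl (c * d) b a) - (hr c (b * a) d) - (hl c b (d * a)) - (congrArg (fun t => c * t) (hl d b a)) - (hl d c (b * a))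
end

section
/- In every bicommutative algebra, the anti-commutator satisfies the weak right-commutativity identity: for all elements a, b, c, d, {{{a,b},c},d} = {{{a,b},d},c}. -/
section Aux
variable {A : Type*} [NonUnitalNonAssocRing A]

lemma jordanBracket_add_left (x y z : A) :
    jordanBracket (x + y) z = jordanBracket x z + jordanBracket y z := by
  simp [jordanBracket, add_mul, mul_add]; abel

lemma swap2 (hl : ∀ a b c : A, a * (b * c) = b * (a * c))
    (hr : ∀ a b c : A, (a * b) * c = (a * c) * b)
    (x y z w : A) : (x * y) * (z * w) = (x * w) * (z * y) := by
  rw [hl (x*y) z w, hr x y w, hl (x*w) z y]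

lemma single (hl : ∀ a b c : A, a * (b * c) = b * (a * c))
    (hr : ∀ a b c : A, (a * b) * c = (a * c) * b)
    (x y c d : A) :
    jordanBracket (jordanBracket (x * y) c) d
      = jordanBracket (jordanBracket (x * y) d) c := by
  simp only [jordanBracket, add_mul, mul_add]
  have h1 : x * y * c * d = x * y * d * c := hr _ _ _
  have h2 : d * (c * (x * y)) = c * (d * (x * y)) := hl _ _ _
  have h3 : c * (x * y) * d = c * (x * y * d) := by
    rw [hl c x y, hr x (c*y) d, hr x y d, ← hl c (x*d) y]
  have h4 : d * (x * y * c) = d * (x * y) * c := by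
    rw [hr x y c, hl d (x*c) y, hl d x y, hr x (d*y) c]
  rw [h1, h2, h3, h4]; abel

end Aux

/-- In every bicommutative algebra, the anti-commutator satisfies the weak
right-commutativity identity `{{{a,b},c},d} = {{{a,b},d},c}`. -/
theorem bicomm_anticommutator_weak_right_comm (A : Type*) [NonUnitalNonAssocRing A]
    (hl : ∀ a b c : A, a * (b * c) = b * (a * c))
    (hr : ∀ a b c : A, (a * b) * c = (a * c) * b)
    (a b c d : A) :
    jordanBracket (jordanBracket (jordanBracket a b) c) d
      = jordanBracket (jordanBracket (jordanBracket a b) d) c := by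
  show jordanBracket (jordanBracket (a * b + b * a) c) d
      = jordanBracket (jordanBracket (a * b + b * a) d) c
  rw [jordanBracket_add_left, jordanBracket_add_left, jordanBracket_add_left,
    jordanBracket_add_left, single hl hr a b c d, single hl hr b a c d]
end

section
/- In every bicommutative algebra, for all elements a, b, c, d the following rewriting identity holds: {{a,c},{b,d}} = {{a,b},{c,d}} − {{{a,b},c},d} − {{{c,d},a},b} + {{{a,c},b},d} + {{{b,d},a},c}. -/

private lemma bicomm_swapL {A : Type*} [NonUnitalNonAssocRing A]
    (hl : ∀ a b c : A, a * (b * c) = b * (a * c))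
    (hr : ∀ a b c : A, (a * b) * c = (a * c) * b)
    (x y z w : A) : x * ((y * z) * w) = y * ((x * z) * w) := by
  calc x * ((y * z) * w) = (y * z) * (x * w) := hl _ _ _
    _ = (y * (x * w)) * z := hr _ _ _
    _ = (x * (y * w)) * z := by rw [hl]
    _ = (x * z) * (y * w) := hr _ _ _
    _ = y * ((x * z) * w) := (hl _ _ _).symm

/-- In every bicommutative algebra, for all `a b c d`:
`{{a,c},{b,d}} = {{a,b},{c,d}} - {{{a,b},c},d} - {{{c,d},a},b} + {{{a,c},b},d} + {{{b,d},a},c}`. -/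
theorem bicomm_anticommutator_rewriting1 (A : Type*) [NonUnitalNonAssocRing A]
    (hl : ∀ a b c : A, a * (b * c) = b * (a * c))
    (hr : ∀ a b c : A, (a * b) * c = (a * c) * b)
    (a b c d : A) :
    jordanBracket (jordanBracket a c) (jordanBracket b d)
      = jordanBracket (jordanBracket a b) (jordanBracket c d)
        - jordanBracket (jordanBracket (jordanBracket a b) c) d
        - jordanBracket (jordanBracket (jordanBracket c d) a) b
        + jordanBracket (jordanBracket (jordanBracket a c) b) d
        + jordanBracket (jordanBracket (jordanBracket b d) a) c := by
  have key := bicomm_swapL hl hr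
  simp only [jordanBracket, mul_add, add_mul, hl, hr, key]
  abel
end

section
/- In every bicommutative algebra, for all elements a, b, c, d the following rewriting identity holds: {{a,d},{b,c}} = {{a,b},{c,d}} − {{{a,b},c},d} − {{{c,d},a},b} + {{{a,d},b},c} + {{{b,c},a},d}. -/
lemma bicomm_key {A : Type*} [NonUnitalNonAssocRing A]
    (hl : ∀ a b c : A, a * (b * c) = b * (a * c))
    (hr : ∀ a b c : A, (a * b) * c = (a * c) * b)
    (x y z w : A) : x * ((y * z) * w) = (x * z) * (y * w) := by
  rw [hl, hr, hl, hr]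

lemma bicomm_pswap {A : Type*} [NonUnitalNonAssocRing A]
    (hl : ∀ a b c : A, a * (b * c) = b * (a * c))
    (hr : ∀ a b c : A, (a * b) * c = (a * c) * b)
    (x y z w : A) : (x * z) * (y * w) = (x * w) * (y * z) := by
  rw [← bicomm_key hl hr, ← bicomm_key hl hr, hr]

lemma bicomm_pcomm {A : Type*} [NonUnitalNonAssocRing A]
    (hl : ∀ a b c : A, a * (b * c) = b * (a * c))
    (hr : ∀ a b c : A, (a * b) * c = (a * c) * b)
    (x y z w : A) : (x * z) * (y * w) = (y * w) * (x * z) := by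
  rw [← bicomm_key hl hr, hl,
    show (y*z)*(x*w) = y*((x*z)*w) from (bicomm_key hl hr ..).symm,
    hr, bicomm_key hl hr]

/-- In every bicommutative algebra, for all `a b c d`:
`{{a,d},{b,c}} = {{a,b},{c,d}} - {{{a,b},c},d} - {{{c,d},a},b} + {{{a,d},b},c} + {{{b,c},a},d}`. -/
theorem bicomm_anticommutator_rewriting2 (A : Type*) [NonUnitalNonAssocRing A]
    (hl : ∀ a b c : A, a * (b * c) = b * (a * c))
    (hr : ∀ a b c : A, (a * b) * c = (a * c) * b)
    (a b c d : A) :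
    jordanBracket (jordanBracket a d) (jordanBracket b c)
      = jordanBracket (jordanBracket a b) (jordanBracket c d)
        - jordanBracket (jordanBracket (jordanBracket a b) c) d
        - jordanBracket (jordanBracket (jordanBracket c d) a) b
        + jordanBracket (jordanBracket (jordanBracket a d) b) c
        + jordanBracket (jordanBracket (jordanBracket b c) a) d := by
  simp only [jordanBracket, mul_add, add_mul]
  simp only [hl, hr]
  simp only [bicomm_key hl hr]
  simp only [bicomm_pswap hl hr, bicomm_pcomm hl hr]
  abel
end

section
/- In every bicommutative algebra, for all elements a, b, c one has [[a,b],c] = {{a,c},b} − {{b,c},a}; in particular every left-normed Lie monomial of degree 3 is a Jordan element (an instance of the inclusion L_n ⊆ J_n for odd n). -/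
/-- In every bicommutative algebra, `[[a,b],c] = {{a,c},b} - {{b,c},a}`; in particular
every left-normed Lie monomial of degree 3 is a Jordan element. -/
theorem bicomm_lie_deg3_is_jordan (A : Type*) [NonUnitalNonAssocRing A]
    (hl : ∀ a b c : A, a * (b * c) = b * (a * c))
    (hr : ∀ a b c : A, (a * b) * c = (a * c) * b)
    (a b c : A) :
    lieBracket (lieBracket a b) c
      = jordanBracket (jordanBracket a c) b - jordanBracket (jordanBracket b c) a := by
  simp only [lieBracket, jordanBracket, sub_mul, mul_sub, add_mul, mul_add]
  rw [hr a c b, hr c a b, hl b a c, hl b c a, hl a c b, hr b a c]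
  abel
end

section
/- There exists a commutative (not necessarily unital, not necessarily associative) algebra A over ℚ that satisfies the minus-Tortken identity (ab)(cd) − (ad)(cb) = −((a(bc) − (ab)c)d) + ((a(dc) − (ad)c)b) for all a, b, c, d ∈ A, but fails weak right-commutativity: there exist a, b ∈ A with ((aa)a)b ≠ ((aa)b)a. Hence weak right-commutativity is not a consequence of commutativity and the minus-Tortken identity. -/
/-- A (not necessarily associative or unital) commutative algebra over `ℚ`:
a `ℚ`-vector space equipped with a `ℚ`-bilinear commutative multiplication. -/
structure CommRatAlgebra where
  carrier : Type
  [addCommGroup : AddCommGroup carrier]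
  [module : Module ℚ carrier]
  mul : carrier →ₗ[ℚ] carrier →ₗ[ℚ] carrier
  mul_comm : ∀ x y : carrier, mul x y = mul y x

attribute [instance] CommRatAlgebra.addCommGroup CommRatAlgebra.module

/-- The bilinear multiplication on `ℚ × ℚ` given by
`(x₁, x₂)(y₁, y₂) = (x₁y₁, (x₁y₂ + x₂y₁)/2)`. -/
noncomputable def exMul : (ℚ × ℚ) →ₗ[ℚ] (ℚ × ℚ) →ₗ[ℚ] (ℚ × ℚ) :=
  LinearMap.mk₂ ℚ (fun x y => (x.1 * y.1, (x.1 * y.2 + x.2 * y.1) / 2))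
    (by intro x y z; simp [Prod.ext_iff]; constructor <;> ring)
    (by intro r x y; simp [Prod.ext_iff]; constructor <;> ring)
    (by intro x y z; simp [Prod.ext_iff]; constructor <;> ring)
    (by intro r x y; simp [Prod.ext_iff]; constructor <;> ring)

/-- There is a commutative algebra over `ℚ` satisfying the minus-Tortken identity
`(ab)(cd) - (ad)(cb) = -((a(bc) - (ab)c)d) + ((a(dc) - (ad)c)b)` which fails weak
right-commutativity: `((aa)a)b ≠ ((aa)b)a` for some `a, b`. Hence weak
right-commutativity is not a consequence of commutativity and minus-Tortken. -/
theorem weak_right_comm_not_consequence_of_minus_tortken :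
    ∃ A : CommRatAlgebra,
      (∀ a b c d : A.carrier,
        A.mul (A.mul a b) (A.mul c d) - A.mul (A.mul a d) (A.mul c b)
          = -A.mul (A.mul a (A.mul b c) - A.mul (A.mul a b) c) d
            + A.mul (A.mul a (A.mul d c) - A.mul (A.mul a d) c) b) ∧
      (∃ a b : A.carrier,
        A.mul (A.mul (A.mul a a) a) b ≠ A.mul (A.mul (A.mul a a) b) a) := by
  refine ⟨⟨ℚ × ℚ, exMul, ?_⟩, ?_, (1, 0), (0, 1), ?_⟩
  · intro x y
    simp [exMul, Prod.ext_iff]; constructor <;> ring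
  · intro a b c d
    simp [exMul, LinearMap.mk₂_apply, Prod.ext_iff, Prod.sub_def, Prod.add_def]
    constructor <;> ring
  · simp [exMul, Prod.ext_iff]
    norm_num
end

section
/- There exists a commutative (not necessarily unital, not necessarily associative) algebra A over ℚ that satisfies the weak right-commutativity identity ((ab)c)d = ((ab)d)c for all a, b, c, d ∈ A, but fails the minus-Tortken identity: there exist a, b, c, d ∈ A with (ab)(cd) − (ad)(cb) ≠ −((a(bc) − (ab)c)d) + ((a(dc) − (ad)c)b). Hence the minus-Tortken identity is not a consequence of commutativity and weak right-commutativity. -/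
/-! On `ℚ⁶` with basis `e₀, …, e₅` take the commutative product whose only nonzero values on
basis vectors are `e₀e₀ = e₂`, `e₀e₁ = e₃`, `e₁e₁ = e₄` and `e₂e₄ = e₅`. A product `(ab)c` can only
be nonzero through `e₂e₄`, so it lies in `ℚe₅`, which annihilates everything: every `((ab)c)d`
vanishes and weak right-commutativity holds trivially. For `a = b = e₀`, `c = d = e₁` the term
`(ab)(cd) = e₂e₄ = e₅` survives, while every other term of the minus-Tortken identity is zero. -/

namespace MinusTortkenCounterexample

def mulFun (x y : Fin 6 → ℚ) : Fin 6 → ℚ :=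
  ![0, 0, x 0 * y 0, x 0 * y 1 + x 1 * y 0, x 1 * y 1, x 2 * y 4 + x 4 * y 2]

def mul : (Fin 6 → ℚ) →ₗ[ℚ] (Fin 6 → ℚ) →ₗ[ℚ] (Fin 6 → ℚ) :=
  LinearMap.mk₂ ℚ mulFun
    (fun x x' y => by funext k; fin_cases k <;> simp [mulFun] <;> ring)
    (fun r x y => by funext k; fin_cases k <;> simp [mulFun] <;> ring)
    (fun x y y' => by funext k; fin_cases k <;> simp [mulFun] <;> ring)
    (fun r x y => by funext k; fin_cases k <;> simp [mulFun] <;> ring)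

theorem mul_apply (x y : Fin 6 → ℚ) : mul x y = mulFun x y := rfl

theorem mul_comm (x y : Fin 6 → ℚ) : mul x y = mul y x := by
  funext k; fin_cases k <;> simp [mul_apply, mulFun] <;> ring

def algebra : CommRatAlgebra := ⟨Fin 6 → ℚ, mul, mul_comm⟩

theorem mul_mul_mul_eq_zero (a b c d : Fin 6 → ℚ) : mul (mul (mul a b) c) d = 0 := by
  funext k; fin_cases k <;> simp [mul_apply, mulFun]

theorem minusTortken_fails :
    let a : Fin 6 → ℚ := Pi.single 0 1
    let c : Fin 6 → ℚ := Pi.single 1 1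
    mul (mul a a) (mul c c) - mul (mul a c) (mul c a)
      ≠ -mul (mul a (mul a c) - mul (mul a a) c) c + mul (mul a (mul c c) - mul (mul a c) c) a := by
  intro a c h
  have h₅ := congrFun h 5
  simp [a, c, mul_apply, mulFun] at h₅

end MinusTortkenCounterexample

/-- There is a commutative algebra over `ℚ` satisfying the weak right-commutativity
identity `((ab)c)d = ((ab)d)c` which fails the minus-Tortken identity. Hence
minus-Tortken is not a consequence of commutativity and weak right-commutativity. -/
theorem minus_tortken_not_consequence_of_weak_right_comm :
    ∃ A : CommRatAlgebra,
      (∀ a b c d : A.carrier,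
        A.mul (A.mul (A.mul a b) c) d = A.mul (A.mul (A.mul a b) d) c) ∧
      (∃ a b c d : A.carrier,
        A.mul (A.mul a b) (A.mul c d) - A.mul (A.mul a d) (A.mul c b)
          ≠ -A.mul (A.mul a (A.mul b c) - A.mul (A.mul a b) c) d
            + A.mul (A.mul a (A.mul d c) - A.mul (A.mul a d) c) b) := by
  open MinusTortkenCounterexample in
  exact ⟨algebra,
    fun a b c d => (mul_mul_mul_eq_zero a b c d).trans (mul_mul_mul_eq_zero a b d c).symm,
    _, _, _, _, minusTortken_fails⟩
end
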